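/- (Adaptive flexibility function, Theorem 1) Let a ∈ ℝ, b < 0, λ < 0, C > 0, d̄ ∈ ℝ, and adaptation gains γ_α, γ_β, γ_ζ > 0. Let Proj_α, Proj_β, Proj_ζ be projection operators with respective bounds [α_min, α_max], [β_min, β_max], [ζ_min, ζ_max] and tolerances ε_α, ε_β, ε_ζ, and suppose the ideal parameters α* = (λ − a)/b, β* = 1/(b·C), ζ* = −d̄ satisfy α* ∈ [α_min + ε_α, α_max − ε_α], β* ∈ [β_min + ε_β, β_max − ε_β], ζ* ∈ [ζ_min + ε_ζ, ζ_max − ε_ζ]. Let r : ℝ → ℝ be continuous and bounded, and let X, Y, α̂, β̂, ζ̂ : ℝ → ℝ be differentiable and satisfy for all t ≥ 0: X'(t) = a·X(t) + b·(u(t) + d̄) with price signal u(t) = α̂(t)·X(t) + β̂(t)·r(t) + ζ̂(t); Y'(t) = λ·Y(t) + r(t)/C; α̂'(t) = γ_α·Proj_α(α̂(t), −sgn(b)·X(t)·e(t)); β̂'(t) = γ_β·Proj_β(β̂(t), −sgn(b)·r(t)·e(t)); ζ̂'(t) = γ_ζ·Proj_ζ(ζ̂(t), −sgn(b)·e(t)),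 where e(t) = X(t) − Y(t). Assume the initial adaptive parameters satisfy h_α(α̂(0)) ≤ 1, h_β(β̂(0)) ≤ 1, h_ζ(ζ̂(0)) ≤ 1. Then: (i) the parameter errors α̂ − α*, β̂ − β*, ζ̂ − ζ* and the tracking error e are uniformly bounded on [0, ∞); (ii) α̂(t) ∈ [α_min, α_max], β̂(t) ∈ [β_min, β_max], ζ̂(t) ∈ [ζ_min, ζ_max] for all t ≥ 0, so the price signal u is bounded; and (iii) e(t) → 0 as t → ∞. -/

import Mathlib

open Filter

/-- The convex function `h(θ) = ((θ − θmin − ε)(θ − θmax + ε)) / ((θmax − θmin − ε)·ε)`. -/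
noncomputable def hFun (θmin θmax ε θ : ℝ) : ℝ :=
  ((θ - θmin - ε) * (θ - θmax + ε)) / ((θmax - θmin - ε) * ε)

/-- The projection operator `Proj(θ, Y)`. -/
noncomputable def projOp (θmin θmax ε θ Y : ℝ) : ℝ :=
  if 0 < hFun θmin θmax ε θ ∧ 0 < Y * deriv (hFun θmin θmax ε) θ then
    Y - Y * hFun θmin θmax ε θ
  else Y

/-!
With `sgn b = -1` the adaptive laws are projected gradient laws. The projection keeps each
estimate in the sublevel set `h ≤ 1`, hence in `[θmin, θmax]`, and it only removes a component of
the update pointing away from the ideal parameter, which lies in `[θmin + ε, θmax - ε]`.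
The ideal parameters match the closed loop to the reference model, so that
`e' = λ e + b ∑ (θ̂ - θ*) φ` with regressors `φ = (X, r, 1)`, and then the Lyapunov function
`e² / 2 - b ∑ (θ̂ - θ*)² / (2γ)` decreases at rate at least `-λ e²`. Hence `e` is bounded and
square integrable. A bounded `r` keeps `Y`, and with it `X` and `e'`, bounded, and Barbalat's
lemma gives `e → 0`.
-/

open Set MeasureTheory

section Projection

variable {θmin θmax ε : ℝ}

theorem hasDerivAt_hFun (θmin θmax ε θ : ℝ) :
    HasDerivAt (hFun θmin θmax ε) ((2 * θ - θmin - θmax) / ((θmax - θmin - ε) * ε)) θ := by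
  have h := ((((hasDerivAt_id θ).sub_const θmin).sub_const ε).mul
    (((hasDerivAt_id θ).sub_const θmax).add_const ε)).div_const ((θmax - θmin - ε) * ε)
  exact h.congr_deriv (by simp only [id]; ring)

theorem hFun_denom_pos (hε : 0 < ε) (hεlt : ε < (θmax - θmin) / 2) :
    0 < (θmax - θmin - ε) * ε :=
  mul_pos (by linarith) hε

theorem mem_Icc_of_hFun_le_one {θ : ℝ} (hε : 0 < ε) (hεlt : ε < (θmax - θmin) / 2)
    (hθ : hFun θmin θmax ε θ ≤ 1) : θ ∈ Icc θmin θmax := by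
  have hprod : (θ - θmin - ε) * (θ - θmax + ε) ≤ (θmax - θmin - ε) * ε :=
    (div_le_one (hFun_denom_pos hε hεlt)).mp hθ
  have hprod' : (θ - θmin) * (θ - θmax) ≤ 0 := by nlinarith
  constructor <;> nlinarith

theorem sub_mul_projOp_sub_nonpos {θs θ Y : ℝ} (hε : 0 < ε) (hεlt : ε < (θmax - θmin) / 2)
    (hθs : θs ∈ Icc (θmin + ε) (θmax - ε)) :
    (θ - θs) * (projOp θmin θmax ε θ Y - Y) ≤ 0 := by
  have hK := hFun_denom_pos hε hεlt
  unfold projOp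
  split_ifs with hproj
  · obtain ⟨hh, hY⟩ := hproj
    rw [(hasDerivAt_hFun θmin θmax ε θ).deriv, mul_div_assoc', div_pos_iff_of_pos_right hK] at hY
    have hout : 0 < (θ - θmin - ε) * (θ - θmax + ε) := (div_pos_iff_of_pos_right hK).mp hh
    have hsign : 0 ≤ (θ - θs) * (2 * θ - θmin - θmax) := by
      obtain ⟨h1, h2⟩ := hθs
      rcases mul_pos_iff.mp hout with ⟨_, _⟩ | ⟨_, _⟩ <;> nlinarith
    have hθY : 0 ≤ (θ - θs) * Y := by
      by_contra! hneg
      nlinarith [mul_neg_of_neg_of_pos hneg hY, mul_nonneg (sq_nonneg Y) hsign]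
    nlinarith [mul_nonneg hθY hh.le]
  · simp

theorem deriv_hFun_mul_projOp_nonpos {θ Y : ℝ} (hθ : 1 ≤ hFun θmin θmax ε θ) :
    deriv (hFun θmin θmax ε) θ * projOp θmin θmax ε θ Y ≤ 0 := by
  unfold projOp
  split_ifs with hproj
  · nlinarith [hproj.2]
  · have hY : Y * deriv (hFun θmin θmax ε) θ ≤ 0 :=
      not_lt.mp fun h => hproj ⟨by linarith, h⟩
    linarith

end Projection

theorem le_max_of_deriv_nonpos_above {g g' : ℝ → ℝ} {c : ℝ}
    (hg : ∀ t ≥ 0, HasDerivAt g (g' t) t) (hc : ∀ t ≥ 0, c ≤ g t → g' t ≤ 0) :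
    ∀ t ≥ 0, g t ≤ max (g 0) c := by
  intro t ht
  refine le_of_forall_pos_le_add fun δ hδ => ?_
  -- Compare with the barrier `x ↦ max (g 0) c + κ x` of slope `κ > 0`, then let `κ → 0`.
  set κ := δ / (t + 1)
  have hκ : 0 < κ := by positivity
  have hbarrier := image_le_of_deriv_right_lt_deriv_boundary (a := 0) (b := t)
    (B := fun x => max (g 0) c + κ * x) (B' := fun _ => κ)
    (fun x hx => (hg x hx.1).continuousAt.continuousWithinAt)
    (fun x hx => (hg x hx.1).hasDerivWithinAt) (by simp)
    (fun x => ((hasDerivAt_id x).const_mul κ).const_add _ |>.congr_deriv (mul_one κ))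
    (fun x hx hgx =>
      (hc x hx.1 (by nlinarith [le_max_right (g 0) c, mul_nonneg hκ.le hx.1])).trans_lt hκ)
    ⟨ht, le_rfl⟩
  have hκt : κ * t ≤ δ := by
    rw [div_mul_eq_mul_div, div_le_iff₀ (by linarith)]; nlinarith
  linarith

theorem mem_Icc_of_hasDerivAt_projOp {θmin θmax ε γ : ℝ} {θ Y : ℝ → ℝ} (hε : 0 < ε)
    (hεlt : ε < (θmax - θmin) / 2) (hγ : 0 ≤ γ)
    (hθ : ∀ t ≥ 0, HasDerivAt θ (γ * projOp θmin θmax ε (θ t) (Y t)) t)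
    (hθ0 : hFun θmin θmax ε (θ 0) ≤ 1) :
    ∀ t ≥ 0, θ t ∈ Icc θmin θmax := by
  have hcomp : ∀ t ≥ 0, HasDerivAt (fun s => hFun θmin θmax ε (θ s))
      (deriv (hFun θmin θmax ε) (θ t) * (γ * projOp θmin θmax ε (θ t) (Y t))) t :=
    fun t ht => by
      rw [(hasDerivAt_hFun θmin θmax ε (θ t)).deriv]
      exact (hasDerivAt_hFun θmin θmax ε (θ t)).comp t (hθ t ht)
  have hdecr : ∀ t ≥ 0, 1 ≤ hFun θmin θmax ε (θ t) →
      deriv (hFun θmin θmax ε) (θ t) * (γ * projOp θmin θmax ε (θ t) (Y t)) ≤ 0 :=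
    fun t _ h1 => by
      rw [mul_left_comm]
      exact mul_nonpos_of_nonneg_of_nonpos hγ (deriv_hFun_mul_projOp_nonpos h1)
  intro t ht
  refine mem_Icc_of_hFun_le_one hε hεlt ?_
  simpa [hθ0] using le_max_of_deriv_nonpos_above hcomp hdecr t ht

theorem abs_le_max_of_hasDerivAt_stable {y g : ℝ → ℝ} {lam K : ℝ} (hlam : lam < 0)
    (hy : ∀ t ≥ 0, HasDerivAt y (lam * y t + g t) t) (hg : ∀ t ≥ 0, |g t| ≤ K) :
    ∀ t ≥ 0, |y t| ≤ max |y 0| (K / -lam) := by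
  have hK : ∀ {z : ℝ}, K / -lam ≤ z → lam * z + K ≤ 0 := fun hz => by
    rw [div_le_iff₀ (neg_pos.mpr hlam)] at hz; linarith
  have hup := le_max_of_deriv_nonpos_above hy fun t ht hyt =>
    by linarith [hK hyt, (abs_le.mp (hg t ht)).2]
  have hlow := le_max_of_deriv_nonpos_above (fun t ht => (hy t ht).neg) fun t ht hyt => by
    rw [Pi.neg_apply] at hyt
    linarith [hK hyt, (abs_le.mp (hg t ht)).1]
  intro t ht
  refine abs_le.mpr ⟨?_, ?_⟩
  · have := (hlow t ht).trans (max_le_max (neg_le_abs (y 0)) le_rfl)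
    simp only [Pi.neg_apply] at this
    linarith
  · exact (hup t ht).trans (max_le_max (le_abs_self _) le_rfl)

theorem sq_div_two_sub_mul_integral_le {ι : Type*} [Fintype ι] {lam b : ℝ} (hb : b ≤ 0)
    {γ θs : ι → ℝ} (hγ : ∀ i, 0 < γ i) {e : ℝ → ℝ} {θ φ P : ι → ℝ → ℝ}
    (he : ∀ t ≥ 0, HasDerivAt e (lam * e t + b * ∑ i, (θ i t - θs i) * φ i t) t)
    (hθ : ∀ i, ∀ t ≥ 0, HasDerivAt (θ i) (γ i * P i t) t)
    (hP : ∀ i, ∀ t ≥ 0, (θ i t - θs i) * (P i t - φ i t * e t) ≤ 0) :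
    ∀ t ≥ 0, e t ^ 2 / 2 - lam * ∫ s in 0..t, e s ^ 2 ≤
      e 0 ^ 2 / 2 - b * ∑ i, (θ i 0 - θs i) ^ 2 / (2 * γ i) := by
  set V := fun t => e t ^ 2 / 2 - b * ∑ i, (θ i t - θs i) ^ 2 / (2 * γ i)
  set V' := fun t => e t * (lam * e t + b * ∑ i, (θ i t - θs i) * φ i t) -
    b * ∑ i, (θ i t - θs i) * P i t
  have hV : ∀ t ≥ 0, HasDerivAt V (V' t) t := fun t ht => by
    have hsum := HasDerivAt.fun_sum fun i (_ : i ∈ Finset.univ) =>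
      (((hθ i t ht).sub_const (θs i)).pow 2).div_const (2 * γ i)
    refine (((he t ht).pow 2).div_const 2 |>.sub (hsum.const_mul b)).congr_deriv ?_
    simp only [V']
    congr 1
    · ring
    · congr 1
      refine Finset.sum_congr rfl fun i _ => ?_
      field_simp [(hγ i).ne']
      ring
  have hV' : ∀ t ≥ 0, V' t ≤ lam * e t ^ 2 := fun t ht => by
    have hsum : ∑ i, (θ i t - θs i) * (P i t - φ i t * e t) =
        ∑ i, (θ i t - θs i) * P i t - e t * ∑ i, (θ i t - θs i) * φ i t := by
      rw [Finset.mul_sum, ← Finset.sum_sub_distrib]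
      exact Finset.sum_congr rfl fun i _ => by ring
    have hdiff : V' t - lam * e t ^ 2 = -b * ∑ i, (θ i t - θs i) * (P i t - φ i t * e t) := by
      simp only [V']
      rw [hsum]
      ring
    have := mul_nonpos_of_nonneg_of_nonpos (neg_nonneg.mpr hb)
      (Finset.sum_nonpos fun i (_ : i ∈ Finset.univ) => hP i t ht)
    linarith
  intro t ht
  have hdecay : V t - V 0 ≤ ∫ s in 0..t, lam * e s ^ 2 :=
    intervalIntegral.sub_le_integral_of_hasDeriv_right_of_le ht
      (fun s hs => (hV s hs.1).continuousAt.continuousWithinAt)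
      (fun s hs => (hV s hs.1.le).hasDerivWithinAt)
      (ContinuousOn.integrableOn_Icc fun s hs =>
        ((he s hs.1).continuousAt.pow 2).const_smul lam |>.continuousWithinAt)
      (fun s hs => hV' s hs.1.le)
  have hpos : 0 ≤ -b * ∑ i, (θ i t - θs i) ^ 2 / (2 * γ i) :=
    mul_nonneg (neg_nonneg.mpr hb)
      (Finset.sum_nonneg fun i _ => div_nonneg (sq_nonneg _) (by linarith [hγ i]))
  rw [intervalIntegral.integral_const_mul] at hdecay
  simp only [V] at hdecay
  linarith

theorem tendsto_zero_of_integral_sq_le {f f' : ℝ → ℝ} {L B : ℝ}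
    (hf : ∀ t ≥ 0, HasDerivAt f (f' t) t) (hf' : ∀ t ≥ 0, |f' t| ≤ L)
    (hB : ∀ t ≥ 0, ∫ s in 0..t, f s ^ 2 ≤ B) : Tendsto f atTop (nhds 0) := by
  have hcont : ContinuousOn (fun s => f s ^ 2) (Ici 0) :=
    fun s hs => ((hf s hs).continuousAt.pow 2).continuousWithinAt
  have hintervalIntegrable : ∀ {a b}, 0 ≤ a → 0 ≤ b →
      IntervalIntegrable (fun s => f s ^ 2) volume a b :=
    fun ha hb => (hcont.mono fun s hs => (le_inf ha hb).trans hs.1).intervalIntegrable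
  have hintegrable : IntegrableOn (fun s => f s ^ 2) (Ioi 0) :=
    integrableOn_Ioi_of_intervalIntegral_norm_bounded B 0
      (fun i => (hcont.mono fun s hs => hs.1).integrableOn_Icc.mono_set Ioc_subset_Icc_self)
      tendsto_id (by
        filter_upwards [eventually_ge_atTop 0] with i hi
        simpa only [id, norm_pow, Real.norm_eq_abs, sq_abs] using hB i hi)
  have hwindow : ∀ δ ≥ 0, Tendsto (fun t => ∫ s in t..t + δ, f s ^ 2) atTop (nhds 0) := by
    intro δ hδ
    have hlim : Tendsto (fun t => ∫ s in 0..t, f s ^ 2) atTop (nhds (∫ s in Ioi 0, f s ^ 2)) :=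
      intervalIntegral_tendsto_integral_Ioi 0 hintegrable tendsto_id
    have hshift : Tendsto (fun t => ∫ s in 0..t + δ, f s ^ 2) atTop
        (nhds (∫ s in Ioi 0, f s ^ 2)) :=
      hlim.comp (tendsto_atTop_add_const_right _ δ tendsto_id)
    rw [← sub_self (∫ s in Ioi 0, f s ^ 2)]
    refine (hshift.sub hlim).congr' ?_
    filter_upwards [eventually_ge_atTop 0] with t ht
    exact intervalIntegral.integral_interval_sub_left (hintervalIntegrable le_rfl (by linarith))
      (hintervalIntegrable le_rfl ht)
  have hlip : ∀ t s, 0 ≤ t → t ≤ s → |f s - f t| ≤ L * (s - t) := fun t s ht hts => by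
    have := (convex_Ici (0:ℝ)).norm_image_sub_le_of_norm_hasDerivWithin_le
      (fun x hx => (hf x hx).hasDerivWithinAt) (fun x hx => hf' x hx) ht (ht.trans hts)
    rwa [Real.norm_eq_abs, Real.norm_eq_abs, abs_of_nonneg (sub_nonneg.mpr hts)] at this
  have hL : 0 ≤ L := (abs_nonneg _).trans (hf' 0 le_rfl)
  refine Metric.tendsto_atTop.mpr fun ε hε => ?_
  -- `|f t| ≥ ε` would force `|f| ≥ ε / 2` on `[t, t + δ]`, so a window integral `≥ (ε / 2) ^ 2 δ`.
  set δ := ε / (2 * (L + 1))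
  have hδ : 0 < δ := by positivity
  have hLδ : L * δ ≤ ε / 2 := by
    rw [mul_div_assoc', div_le_div_iff₀ (by positivity) two_pos]; nlinarith
  obtain ⟨T, hT⟩ := eventually_atTop.mp
    ((hwindow δ hδ.le).eventually (gt_mem_nhds (show 0 < (ε / 2) ^ 2 * δ by positivity)))
  refine ⟨max T 0, fun t ht => ?_⟩
  have ht0 : 0 ≤ t := le_of_max_le_right ht
  rw [Real.dist_eq, sub_zero]
  by_contra! hft
  have hlow : ∀ s ∈ Icc t (t + δ), (ε / 2) ^ 2 ≤ f s ^ 2 := fun s hs => by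
    have hclose := hlip t s ht0 hs.1
    have hfar : ε / 2 ≤ |f s| := by
      nlinarith [abs_sub_abs_le_abs_sub (f t) (f s), abs_sub_comm (f s) (f t),
        mul_le_mul_of_nonneg_left (show s - t ≤ δ by linarith [hs.2]) hL]
    rw [← sq_abs (f s)]
    exact pow_le_pow_left₀ (by positivity) hfar 2
  have hge := intervalIntegral.integral_mono_on (by linarith) intervalIntegrable_const
    (hintervalIntegrable ht0 (by linarith)) hlow
  rw [intervalIntegral.integral_const, smul_eq_mul, add_sub_cancel_left] at hge
  linarith [hT t (le_of_max_le_left ht)]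

theorem abs_mul_le_of_abs_le {p x P X : ℝ} (hp : |p| ≤ P) (hx : |x| ≤ X) : |p * x| ≤ P * X :=
  abs_mul p x ▸ mul_le_mul hp hx (abs_nonneg x) ((abs_nonneg p).trans hp)

theorem abs_mul_add_mul_le {p x q y P X Q Y : ℝ} (hp : |p| ≤ P) (hx : |x| ≤ X)
    (hq : |q| ≤ Q) (hy : |y| ≤ Y) : |p * x + q * y| ≤ P * X + Q * Y :=
  (abs_add_le _ _).trans (add_le_add (abs_mul_le_of_abs_le hp hx) (abs_mul_le_of_abs_le hq hy))

theorem abs_mul_add_mul_add_le {p x q y w P X Q Y W : ℝ} (hp : |p| ≤ P) (hx : |x| ≤ X)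
    (hq : |q| ≤ Q) (hy : |y| ≤ Y) (hw : |w| ≤ W) : |p * x + q * y + w| ≤ P * X + Q * Y + W :=
  (abs_add_le _ _).trans (add_le_add (abs_mul_add_mul_le hp hx hq hy) hw)

theorem adaptive_flexibility_function_general
    (a b lam C dbar γα γβ γζ : ℝ) (hb : b < 0) (hlam : lam < 0)
    (hγα : 0 < γα) (hγβ : 0 < γβ) (hγζ : 0 < γζ)
    (αmin αmax εα : ℝ) (hεα0 : 0 < εα) (hεα : εα < (αmax - αmin) / 2)
    (βmin βmax εβ : ℝ) (hεβ0 : 0 < εβ) (hεβ : εβ < (βmax - βmin) / 2)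
    (ζmin ζmax εζ : ℝ) (hεζ0 : 0 < εζ) (hεζ : εζ < (ζmax - ζmin) / 2)
    (hαstar : (lam - a) / b ∈ Set.Icc (αmin + εα) (αmax - εα))
    (hβstar : 1 / (b * C) ∈ Set.Icc (βmin + εβ) (βmax - εβ))
    (hζstar : -dbar ∈ Set.Icc (ζmin + εζ) (ζmax - εζ))
    (r : ℝ → ℝ) (hrbnd : ∃ Mr : ℝ, ∀ t ≥ (0:ℝ), |r t| ≤ Mr)
    (X Y αh βh ζh u e : ℝ → ℝ)
    (hu : ∀ t, u t = αh t * X t + βh t * r t + ζh t)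
    (he : ∀ t, e t = X t - Y t)
    (hXdot : ∀ t ≥ (0:ℝ), HasDerivAt X (a * X t + b * (u t + dbar)) t)
    (hYdot : ∀ t ≥ (0:ℝ), HasDerivAt Y (lam * Y t + r t / C) t)
    (hαdot : ∀ t ≥ (0:ℝ), HasDerivAt αh
      (γα * projOp αmin αmax εα (αh t) (-Real.sign b * (X t * e t))) t)
    (hβdot : ∀ t ≥ (0:ℝ), HasDerivAt βh
      (γβ * projOp βmin βmax εβ (βh t) (-Real.sign b * (r t * e t))) t)
    (hζdot : ∀ t ≥ (0:ℝ), HasDerivAt ζh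
      (γζ * projOp ζmin ζmax εζ (ζh t) (-Real.sign b * e t)) t)
    (hα0 : hFun αmin αmax εα (αh 0) ≤ 1)
    (hβ0 : hFun βmin βmax εβ (βh 0) ≤ 1)
    (hζ0 : hFun ζmin ζmax εζ (ζh 0) ≤ 1) :
    (∃ M : ℝ, ∀ t ≥ (0:ℝ),
      |αh t - (lam - a) / b| ≤ M ∧ |βh t - 1 / (b * C)| ≤ M ∧
      |ζh t - (-dbar)| ≤ M ∧ |e t| ≤ M) ∧
    ((∀ t ≥ (0:ℝ), αh t ∈ Set.Icc αmin αmax ∧ βh t ∈ Set.Icc βmin βmax ∧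
        ζh t ∈ Set.Icc ζmin ζmax) ∧
      ∃ Mu : ℝ, ∀ t ≥ (0:ℝ), |u t| ≤ Mu) ∧
    Tendsto e atTop (nhds 0) := by
  obtain ⟨Mr, hr⟩ := hrbnd
  simp only [Real.sign_of_neg hb, neg_neg, one_mul] at hαdot hβdot hζdot
  have hα := mem_Icc_of_hasDerivAt_projOp hεα0 hεα hγα.le hαdot hα0
  have hβ := mem_Icc_of_hasDerivAt_projOp hεβ0 hεβ hγβ.le hβdot hβ0
  have hζ := mem_Icc_of_hasDerivAt_projOp hεζ0 hεζ hγζ.le hζdot hζ0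
  -- The ideal parameters are exactly those that match the closed loop to the reference model.
  have hedot : ∀ t ≥ (0:ℝ), HasDerivAt e (lam * e t + b * ((αh t - (lam - a) / b) * X t +
      (βh t - 1 / (b * C)) * r t + (ζh t - -dbar))) t := fun t ht =>
    ((hXdot t ht).sub (hYdot t ht)).congr_of_eventuallyEq (.of_forall he) |>.congr_deriv (by
      rw [hu, he]; field_simp [hb.ne]; ring)
  obtain ⟨V0, hV0⟩ : ∃ V0, ∀ t ≥ (0:ℝ), e t ^ 2 / 2 - lam * ∫ s in 0..t, e s ^ 2 ≤ V0 :=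
    ⟨_, sq_div_two_sub_mul_integral_le hb.le (γ := ![γα, γβ, γζ]) (θ := ![αh, βh, ζh])
      (θs := ![(lam - a) / b, 1 / (b * C), -dbar]) (φ := ![X, r, 1])
      (P := ![fun t => projOp αmin αmax εα (αh t) (X t * e t),
        fun t => projOp βmin βmax εβ (βh t) (r t * e t), fun t => projOp ζmin ζmax εζ (ζh t) (e t)])
      (fun i => by fin_cases i <;> assumption)
      (fun t ht => by simpa [Fin.sum_univ_three] using hedot t ht)
      (fun i => by fin_cases i <;> assumption)
      (fun i t _ => by
        fin_cases i
        exacts [sub_mul_projOp_sub_nonpos hεα0 hεα hαstar,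
          sub_mul_projOp_sub_nonpos hεβ0 hεβ hβstar,
          by simpa using sub_mul_projOp_sub_nonpos hεζ0 hεζ hζstar])⟩
  have hint_nonneg : ∀ t ≥ (0:ℝ), 0 ≤ ∫ s in 0..t, e s ^ 2 :=
    fun t ht => intervalIntegral.integral_nonneg ht fun s _ => sq_nonneg _
  have he_bd : ∀ t ≥ (0:ℝ), |e t| ≤ √(2 * V0) :=
    fun t ht => Real.abs_le_sqrt (by nlinarith [hV0 t ht, hint_nonneg t ht])
  have hint_bd : ∀ t ≥ (0:ℝ), ∫ s in 0..t, e s ^ 2 ≤ V0 / -lam := fun t ht => by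
    rw [le_div_iff₀ (by linarith)]; nlinarith [hV0 t ht, sq_nonneg (e t)]
  have hY := abs_le_max_of_hasDerivAt_stable hlam hYdot (K := Mr / |C|) fun t ht => by
    rw [abs_div]; exact div_le_div_of_nonneg_right (hr t ht) (abs_nonneg C)
  have hX : ∀ t ≥ (0:ℝ), |X t| ≤ √(2 * V0) + max |Y 0| (Mr / |C| / -lam) := fun t ht => by
    rw [show X t = e t + Y t by rw [he]; ring]
    exact (abs_add_le _ _).trans (add_le_add (he_bd t ht) (hY t ht))
  have hαdev : ∀ t ≥ (0:ℝ), |αh t - (lam - a) / b| ≤ αmax - αmin := fun t ht =>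
    Real.dist_le_of_mem_Icc (hα t ht) (Icc_subset_Icc (by linarith) (by linarith) hαstar)
  have hβdev : ∀ t ≥ (0:ℝ), |βh t - 1 / (b * C)| ≤ βmax - βmin := fun t ht =>
    Real.dist_le_of_mem_Icc (hβ t ht) (Icc_subset_Icc (by linarith) (by linarith) hβstar)
  have hζdev : ∀ t ≥ (0:ℝ), |ζh t - -dbar| ≤ ζmax - ζmin := fun t ht =>
    Real.dist_le_of_mem_Icc (hζ t ht) (Icc_subset_Icc (by linarith) (by linarith) hζstar)
  refine ⟨⟨max (max (αmax - αmin) (βmax - βmin)) (max (ζmax - ζmin) √(2 * V0)), fun t ht =>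
      ⟨(hαdev t ht).trans ((le_max_left _ _).trans (le_max_left _ _)),
        (hβdev t ht).trans ((le_max_right _ _).trans (le_max_left _ _)),
        (hζdev t ht).trans ((le_max_left _ _).trans (le_max_right _ _)),
        (he_bd t ht).trans ((le_max_right _ _).trans (le_max_right _ _))⟩⟩,
    ⟨fun t ht => ⟨hα t ht, hβ t ht, hζ t ht⟩, _, fun t ht => hu t ▸
      abs_mul_add_mul_add_le (abs_le_max_abs_abs (hα t ht).1 (hα t ht).2) (hX t ht)
        (abs_le_max_abs_abs (hβ t ht).1 (hβ t ht).2) (hr t ht)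
        (abs_le_max_abs_abs (hζ t ht).1 (hζ t ht).2)⟩,
    tendsto_zero_of_integral_sq_le hedot (fun t ht => abs_mul_add_mul_le le_rfl (he_bd t ht) le_rfl
      (abs_mul_add_mul_add_le (hαdev t ht) (hX t ht) (hβdev t ht) (hr t ht) (hζdev t ht)))
      hint_bd⟩

/-- Adaptive flexibility function (Theorem 1): with the projection-based adaptive laws,
(i) the parameter errors and the tracking error `e = X − Y` are uniformly bounded on
`[0, ∞)`; (ii) the adaptive parameters stay in their prescribed intervals, so the price
signal `u` is bounded; and (iii) `e(t) → 0` as `t → ∞`. -/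
theorem adaptive_flexibility_function
    (a b lam C dbar γα γβ γζ : ℝ) (hb : b < 0) (hlam : lam < 0) (hC : 0 < C)
    (hγα : 0 < γα) (hγβ : 0 < γβ) (hγζ : 0 < γζ)
    (αmin αmax εα : ℝ) (hαlt : αmin < αmax) (hεα0 : 0 < εα) (hεα : εα < (αmax - αmin) / 2)
    (βmin βmax εβ : ℝ) (hβlt : βmin < βmax) (hεβ0 : 0 < εβ) (hεβ : εβ < (βmax - βmin) / 2)
    (ζmin ζmax εζ : ℝ) (hζlt : ζmin < ζmax) (hεζ0 : 0 < εζ) (hεζ : εζ < (ζmax - ζmin) / 2)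
    (hαstar : (lam - a) / b ∈ Set.Icc (αmin + εα) (αmax - εα))
    (hβstar : 1 / (b * C) ∈ Set.Icc (βmin + εβ) (βmax - εβ))
    (hζstar : -dbar ∈ Set.Icc (ζmin + εζ) (ζmax - εζ))
    (r : ℝ → ℝ) (hrcont : Continuous r) (hrbnd : ∃ Mr : ℝ, ∀ t ≥ (0:ℝ), |r t| ≤ Mr)
    (X Y αh βh ζh u e : ℝ → ℝ)
    (hu : ∀ t, u t = αh t * X t + βh t * r t + ζh t)
    (he : ∀ t, e t = X t - Y t)
    (hXdot : ∀ t ≥ (0:ℝ), HasDerivAt X (a * X t + b * (u t + dbar)) t)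
    (hYdot : ∀ t ≥ (0:ℝ), HasDerivAt Y (lam * Y t + r t / C) t)
    (hαdot : ∀ t ≥ (0:ℝ), HasDerivAt αh
      (γα * projOp αmin αmax εα (αh t) (-Real.sign b * (X t * e t))) t)
    (hβdot : ∀ t ≥ (0:ℝ), HasDerivAt βh
      (γβ * projOp βmin βmax εβ (βh t) (-Real.sign b * (r t * e t))) t)
    (hζdot : ∀ t ≥ (0:ℝ), HasDerivAt ζh
      (γζ * projOp ζmin ζmax εζ (ζh t) (-Real.sign b * e t)) t)
    (hα0 : hFun αmin αmax εα (αh 0) ≤ 1)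
    (hβ0 : hFun βmin βmax εβ (βh 0) ≤ 1)
    (hζ0 : hFun ζmin ζmax εζ (ζh 0) ≤ 1) :
    (∃ M : ℝ, ∀ t ≥ (0:ℝ),
      |αh t - (lam - a) / b| ≤ M ∧ |βh t - 1 / (b * C)| ≤ M ∧
      |ζh t - (-dbar)| ≤ M ∧ |e t| ≤ M) ∧
    ((∀ t ≥ (0:ℝ), αh t ∈ Set.Icc αmin αmax ∧ βh t ∈ Set.Icc βmin βmax ∧
        ζh t ∈ Set.Icc ζmin ζmax) ∧
      ∃ Mu : ℝ, ∀ t ≥ (0:ℝ), |u t| ≤ Mu) ∧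
    Tendsto e atTop (nhds 0) :=
  adaptive_flexibility_function_general a b lam C dbar γα γβ γζ hb hlam hγα hγβ hγζ αmin αmax εα
    hεα0 hεα βmin βmax εβ hεβ0 hεβ ζmin ζmax εζ hεζ0 hεζ hαstar hβstar hζstar r hrbnd X Y αh βh ζh u
    e hu he hXdot hYdot hαdot hβdot hζdot hα0 hβ0 hζ0
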